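/- arXiv:2206.06179 — 3 statements merged into one kernel-verified Lean document; each statement's English description precedes it below -/
import Mathlib

section
/- If U : ℝ^d → ℝ is differentiable with L-Lipschitz gradient, satisfies the dissipativity condition ∇U(x)·x ≥ r|x|² − m for all x, and min U = 0, then there exists a constant K > 0 such that (r/3)|x|² − K ≤ U(x) ≤ L|x|² + K for all x ∈ ℝ^d. -/
/-!
Differentiating `U` along segments reduces both bounds to comparing derivatives of functions of
one real variable. The upper bound is the descent lemma `U y ≤ U x + ⟪∇U x, y - x⟫ + L/2 ‖y - x‖²`
applied at a minimiser `x₀`, where `U x₀ = 0` and `∇U x₀ = 0`. For the lower bound, dissipativity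
gives `d/dt U (t • x) ≥ r t ‖x‖² - m / t ≥ r t ‖x‖² - 2m` on `[1/2, 1]`, so
`U x ≥ U (x/2) + (3r/8) ‖x‖² - m ≥ (3r/8) ‖x‖² - m`.
-/

open scoped RealInnerProductSpace NNReal Gradient
open Set

theorem sub_le_sub_of_hasDerivAt_le {f g f' g' : ℝ → ℝ} {a b : ℝ} (hab : a ≤ b)
    (hf : ∀ t ∈ Icc a b, HasDerivAt f (f' t) t) (hg : ∀ t ∈ Icc a b, HasDerivAt g (g' t) t)
    (hle : ∀ t ∈ Ioo a b, f' t ≤ g' t) : f b - f a ≤ g b - g a := by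
  have hderiv : ∀ t ∈ Icc a b, HasDerivAt (g - f) (g' t - f' t) t :=
    fun t ht ↦ (hg t ht).sub (hf t ht)
  have hmono : MonotoneOn (g - f) (Icc a b) := by
    refine monotoneOn_of_hasDerivWithinAt_nonneg (convex_Icc a b)
      (fun t ht ↦ (hderiv t ht).continuousAt.continuousWithinAt)
      (fun t ht ↦ (hderiv t (interior_subset ht)).hasDerivWithinAt) ?_
    rw [interior_Icc]
    exact fun t ht ↦ sub_nonneg.mpr (hle t ht)
  have := hmono (left_mem_Icc.mpr hab) (right_mem_Icc.mpr hab) hab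
  simp only [Pi.sub_apply] at this
  linarith

section InnerProductSpace

variable {E : Type*} [NormedAddCommGroup E] [InnerProductSpace ℝ E] [CompleteSpace E]
  {f : E → ℝ}

theorem HasGradientAt.hasDerivAt_comp_add_smul {f' x v : E} {t : ℝ}
    (hf : HasGradientAt f f' (x + t • v)) :
    HasDerivAt (fun s : ℝ ↦ f (x + s • v)) ⟪f', v⟫ t := by
  have hline : HasDerivAt (fun s : ℝ ↦ x + s • v) v t := by
    simpa using ((hasDerivAt_id t).smul_const v).const_add x
  exact (hf.hasFDerivAt.comp_hasDerivAt t hline).congr_deriv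
    (by simp [InnerProductSpace.toDual_apply_apply])

theorem IsLocalMin.gradient_eq_zero {a : E} (h : IsLocalMin f a) : ∇ f a = 0 := by
  simp [gradient, h.fderiv_eq_zero]

theorem apply_le_apply_add_inner_gradient_add_sq (hf : Differentiable ℝ f) {L : ℝ≥0}
    (hL : LipschitzWith L (∇ f)) (x y : E) :
    f y ≤ f x + ⟪∇ f x, y - x⟫ + L / 2 * ‖y - x‖ ^ 2 := by
  set v := y - x
  have hcomp := sub_le_sub_of_hasDerivAt_le zero_le_one
    (fun t _ ↦ (hf (x + t • v)).hasGradientAt.hasDerivAt_comp_add_smul)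
    (g := fun t ↦ t * ⟪∇ f x, v⟫ + L / 2 * t ^ 2 * ‖v‖ ^ 2)
    (g' := fun t ↦ ⟪∇ f x, v⟫ + L * t * ‖v‖ ^ 2)
    (fun t _ ↦ by
      refine (((hasDerivAt_id t).mul_const ⟪∇ f x, v⟫).add
        (((hasDerivAt_pow 2 t).const_mul (L / 2 : ℝ)).mul_const (‖v‖ ^ 2))).congr_deriv ?_
      simp only [Nat.cast_ofNat]
      ring)
    (fun t ht ↦ by
      have hgrad : ‖∇ f (x + t • v) - ∇ f x‖ ≤ L * (t * ‖v‖) := by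
        simpa [dist_eq_norm, norm_smul, abs_of_pos ht.1] using hL.dist_le_mul (x + t • v) x
      calc ⟪∇ f (x + t • v), v⟫
          = ⟪∇ f x, v⟫ + ⟪∇ f (x + t • v) - ∇ f x, v⟫ := by rw [inner_sub_left]; ring
        _ ≤ ⟪∇ f x, v⟫ + ‖∇ f (x + t • v) - ∇ f x‖ * ‖v‖ := by
            gcongr; exact real_inner_le_norm _ _
        _ ≤ ⟪∇ f x, v⟫ + L * (t * ‖v‖) * ‖v‖ := by gcongr
        _ = ⟪∇ f x, v⟫ + L * t * ‖v‖ ^ 2 := by ring)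
  simp only [one_smul, zero_smul, add_zero, add_sub_cancel, v] at hcomp
  linarith

theorem apply_half_smul_add_le_of_dissipative (hf : Differentiable ℝ f) {r m : ℝ} (hm : 0 ≤ m)
    (hdiss : ∀ x, r * ‖x‖ ^ 2 - m ≤ ⟪∇ f x, x⟫) (x : E) :
    f ((2 : ℝ)⁻¹ • x) + 3 * r / 8 * ‖x‖ ^ 2 - m ≤ f x := by
  have hcomp := sub_le_sub_of_hasDerivAt_le (a := 2⁻¹) (b := 1) (by norm_num)
    (f := fun t ↦ r / 2 * t ^ 2 * ‖x‖ ^ 2 - 2 * m * t) (f' := fun t ↦ r * t * ‖x‖ ^ 2 - 2 * m)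
    (fun t _ ↦ by
      refine ((((hasDerivAt_pow 2 t).const_mul (r / 2)).mul_const (‖x‖ ^ 2)).sub
        ((hasDerivAt_id t).const_mul (2 * m))).congr_deriv ?_
      simp only [Nat.cast_ofNat]
      ring)
    (g := fun t ↦ f (t • x)) (g' := fun t ↦ ⟪∇ f (t • x), x⟫)
    (fun t _ ↦ by simpa using (hf (0 + t • x)).hasGradientAt.hasDerivAt_comp_add_smul)
    (fun t ht ↦ by
      have ht₀ : 0 < t := by linarith [ht.1]
      have hradial : r * (t * ‖x‖) ^ 2 - m ≤ t * ⟪∇ f (t • x), x⟫ := by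
        simpa [norm_smul, abs_of_pos ht₀, real_inner_smul_right] using hdiss (t • x)
      refine le_of_mul_le_mul_left ?_ ht₀
      nlinarith [ht.1])
  simp only [one_smul, one_pow, mul_one] at hcomp
  linarith

end InnerProductSpace

theorem quadratic_growth_of_dissipative
    (d : ℕ) (U : EuclideanSpace ℝ (Fin d) → ℝ) (L r m : ℝ)
    (hL : 0 < L) (hr : 0 < r) (hm : 0 < m)
    (hdiff : Differentiable ℝ U)
    (hlip : LipschitzWith (Real.toNNReal L) (gradient U))
    (hdiss : ∀ x, r * ‖x‖ ^ 2 - m ≤ ⟪gradient U x, x⟫)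
    (hmin0 : ∀ x, 0 ≤ U x) (hmin : ∃ x, U x = 0) :
    ∃ K > 0, ∀ x, (r / 3) * ‖x‖ ^ 2 - K ≤ U x ∧ U x ≤ L * ‖x‖ ^ 2 + K := by
  obtain ⟨x₀, hx₀⟩ := hmin
  have hgrad₀ : gradient U x₀ = 0 :=
    IsLocalMin.gradient_eq_zero (Filter.Eventually.of_forall fun y ↦ hx₀ ▸ hmin0 y)
  refine ⟨L * ‖x₀‖ ^ 2 + m, by positivity, fun x ↦ ⟨?_, ?_⟩⟩
  · have hlower := apply_half_smul_add_le_of_dissipative hdiff hm.le hdiss x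
    linarith [hmin0 ((2 : ℝ)⁻¹ • x), mul_nonneg hr.le (sq_nonneg ‖x‖),
      mul_nonneg hL.le (sq_nonneg ‖x₀‖)]
  · have hupper := apply_le_apply_add_inner_gradient_add_sq hdiff hlip x₀ x
    rw [hx₀, hgrad₀, inner_zero_left, Real.coe_toNNReal L hL.le] at hupper
    have hpar := parallelogram_law_with_norm ℝ x x₀
    nlinarith [mul_nonneg hL.le (sq_nonneg ‖x + x₀‖)]
end

section
/- Let L ≥ 0 and suppose every eigenvalue λᵢ of a symmetric d×d matrix A satisfies |λᵢ| ≤ L. Then every root of the quadratic λ² − (7 + 4L² − 2λᵢ)λ + (17/4 + 6L² − λᵢ² + λᵢ) = 0 is positive, for each eigenvalue λᵢ of A. -/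
theorem quadratic_roots_pos
    (d : ℕ) (L : ℝ) (hL : 0 ≤ L)
    (A : Matrix (Fin d) (Fin d) ℝ) (hA : A.IsSymm)
    (hbound : ∀ μ ∈ spectrum ℝ A, |μ| ≤ L) :
    ∀ μ ∈ spectrum ℝ A, ∀ lam : ℝ,
      lam ^ 2 - (7 + 4 * L ^ 2 - 2 * μ) * lam
        + (17 / 4 + 6 * L ^ 2 - μ ^ 2 + μ) = 0 → 0 < lam := by
  intro μ hμ lam h
  obtain ⟨h1, h2⟩ := abs_le.mp (hbound μ hμ)
  by_contra hle
  push_neg at hle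
  nlinarith [sq_nonneg lam, sq_nonneg (L - μ), sq_nonneg (L + μ), sq_nonneg (2*L - 1), mul_nonneg hL hL]
end

section
/- Let A be a symmetric d×d matrix with ‖A‖₂ ≤ L where L ≥ 0. Then the symmetric 2d×2d block matrix M := [[2I_d, 2I_d − A],[2I_d − A, (6 + 4L²)I_d − 2A]] satisfies M ⪰ (1/2) I_{2d}, i.e. M − (1/2)I_{2d} is positive semidefinite. -/
/-!
Write a vector of `ℝ^{2d}` as `(x, y)` and put `w = A y`, so `‖w‖ ≤ L ‖y‖`. Completing the square
in `x` (a Schur complement step for the block `(3/2) I`), the form of `M - (1/2) I` equals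
`(1/6) ‖3x + 4y - 2w‖² + (17/6 + 4L²) ‖y‖² + (2/3) ⟪y, w⟫ - (2/3) ‖w‖²`,
and `⟪y, w⟫ ≥ -(‖y‖² + ‖w‖²) / 2` leaves at least `(5/2 + 3L²) ‖y‖² ≥ 0`.
-/

open Matrix
open scoped RealInnerProductSpace

section InnerProductSpace

variable {E : Type*} [NormedAddCommGroup E] [InnerProductSpace ℝ E]

theorem half_normSq_add_le_of_norm_le {L : ℝ} (x y w : E) (hw : ‖w‖ ≤ L * ‖y‖) :
    (‖x‖ ^ 2 + ‖y‖ ^ 2) / 2 ≤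
      2 * ‖x‖ ^ 2 + 4 * ⟪x, y⟫ - 2 * ⟪x, w⟫ + (6 + 4 * L ^ 2) * ‖y‖ ^ 2 - 2 * ⟪y, w⟫ := by
  have hw_sq : ‖w‖ ^ 2 ≤ L ^ 2 * ‖y‖ ^ 2 := by
    rw [← mul_pow]
    exact pow_le_pow_left₀ (norm_nonneg w) hw 2
  have h_square : 0 ≤ ‖(3 : ℝ) • x + (4 : ℝ) • y - (2 : ℝ) • w‖ ^ 2 := sq_nonneg _
  have h_yw : 0 ≤ ‖y + w‖ ^ 2 := sq_nonneg _
  have h_y : 0 ≤ ‖y‖ ^ 2 := sq_nonneg _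
  have h_Ly : 0 ≤ L ^ 2 * ‖y‖ ^ 2 := by positivity
  simp only [← real_inner_self_eq_norm_sq, inner_add_left, inner_add_right, inner_sub_left,
    inner_sub_right, real_inner_smul_left, real_inner_smul_right] at *
  linarith [real_inner_comm x y, real_inner_comm x w, real_inner_comm y w]

end InnerProductSpace

theorem dotProduct_eq_inner_toLp {ι : Type*} [Fintype ι] (x y : ι → ℝ) :
    x ⬝ᵥ y = ⟪WithLp.toLp 2 x, WithLp.toLp 2 y⟫ := by
  rw [EuclideanSpace.inner_toLp_toLp, star_trivial, dotProduct_comm]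

theorem dotProduct_self_eq_norm_toLp_sq {ι : Type*} [Fintype ι] (x : ι → ℝ) :
    x ⬝ᵥ x = ‖WithLp.toLp 2 x‖ ^ 2 := by
  rw [dotProduct_eq_inner_toLp, real_inner_self_eq_norm_sq]

theorem block_matrix_lower_bound_general
    (d : ℕ) (L : ℝ)
    (A : Matrix (Fin d) (Fin d) ℝ) (hA : A.IsSymm)
    (hbound : ∀ x : EuclideanSpace ℝ (Fin d), ‖Matrix.toEuclideanLin A x‖ ≤ L * ‖x‖) :
    (Matrix.fromBlocks
        ((2 : ℝ) • (1 : Matrix (Fin d) (Fin d) ℝ))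
        ((2 : ℝ) • 1 - A)
        ((2 : ℝ) • 1 - A)
        ((6 + 4 * L ^ 2) • (1 : Matrix (Fin d) (Fin d) ℝ) - (2 : ℝ) • A)
      - (1 / 2 : ℝ) • (1 : Matrix (Fin d ⊕ Fin d) (Fin d ⊕ Fin d) ℝ)).PosSemidef := by
  rw [posSemidef_iff_dotProduct_mulVec]
  refine ⟨by simp [IsHermitian, fromBlocks_transpose, transpose_sub, hA.eq], fun z => ?_⟩
  obtain ⟨x, y, rfl⟩ : ∃ x y, z = Sum.elim x y :=
    ⟨z ∘ Sum.inl, z ∘ Sum.inr, (Sum.elim_comp_inl_inr z).symm⟩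
  have hA_comm : y ⬝ᵥ A *ᵥ x = x ⬝ᵥ A *ᵥ y := by rw [← dotProduct_transpose_mulVec, hA.eq]
  have key := half_normSq_add_le_of_norm_le (WithLp.toLp 2 x) (WithLp.toLp 2 y)
    (WithLp.toLp 2 (A *ᵥ y)) (hbound (WithLp.toLp 2 y))
  simp only [star_trivial, sub_mulVec, smul_mulVec, one_mulVec, fromBlocks_mulVec,
    sumElim_dotProduct_sumElim, dotProduct_add, dotProduct_sub, dotProduct_smul,
    Sum.elim_comp_inl, Sum.elim_comp_inr, smul_eq_mul, hA_comm, dotProduct_comm y x]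
  rw [dotProduct_self_eq_norm_toLp_sq, dotProduct_self_eq_norm_toLp_sq,
    dotProduct_eq_inner_toLp x y, dotProduct_eq_inner_toLp x, dotProduct_eq_inner_toLp y]
  linarith

theorem block_matrix_lower_bound
    (d : ℕ) (L : ℝ) (hL : 0 ≤ L)
    (A : Matrix (Fin d) (Fin d) ℝ) (hA : A.IsSymm)
    (hbound : ∀ x : EuclideanSpace ℝ (Fin d), ‖Matrix.toEuclideanLin A x‖ ≤ L * ‖x‖) :
    (Matrix.fromBlocks
        ((2 : ℝ) • (1 : Matrix (Fin d) (Fin d) ℝ))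
        ((2 : ℝ) • 1 - A)
        ((2 : ℝ) • 1 - A)
        ((6 + 4 * L ^ 2) • (1 : Matrix (Fin d) (Fin d) ℝ) - (2 : ℝ) • A)
      - (1 / 2 : ℝ) • (1 : Matrix (Fin d ⊕ Fin d) (Fin d ⊕ Fin d) ℝ)).PosSemidef :=
  block_matrix_lower_bound_general d L A hA hbound
end
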